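/- Assume A and B are well-ordered, i.e., for each of them, α_j² = 0 implies α_i² = 0 for all i < j (and likewise for the β's). Let φ : R_A → R_B be a graded ring isomorphism, and set k := #{i : α_i² = 0 in R_A}. Then k = #{i : β_i² = 0 in R_B} and φ(F_k(A)) = F_k(B); in particular φ is k-stable. -/

import Mathlib

open MvPolynomial

namespace Bott

/-- A square integer matrix indexed by `Fin n` (rows, columns).  We think of it as the
matrix `A = (a_{ij})` defining a Bott tower; strict lower triangularity is the
predicate `SLT` below. -/
abbrev Mat (n : ℕ) := Fin n → Fin n → ℤ

/-- `a` is strictly lower triangular: `a i j = 0` unless `j < i`. -/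
def SLT {n : ℕ} (a : Mat n) : Prop := ∀ i j : Fin n, a i j ≠ 0 → (j : ℕ) < (i : ℕ)

section Defs

variable (n : ℕ)

/-- The linear form `α_i = ∑_{j<i} a_{ij} x_j` (the terms with `j ≥ i` vanish for a
strictly lower triangular matrix). -/
noncomputable def alpha (a : Mat n) (i : Fin n) : MvPolynomial (Fin n) ℤ :=
  ∑ j, C (a i j) * X j

/-- The ideal `(x_i² − α_i x_i : 1 ≤ i ≤ n)`. -/
noncomputable def bottIdeal (a : Mat n) : Ideal (MvPolynomial (Fin n) ℤ) :=
  Ideal.span (Set.range fun i : Fin n => X i ^ 2 - alpha n a i * X i)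

/-- The Bott ring `R_A = ℤ[x_1,…,x_n]/(x_i² − α_i x_i)`. -/
abbrev BRing (a : Mat n) := MvPolynomial (Fin n) ℤ ⧸ bottIdeal n a

/-- Quotient projection onto the Bott ring. -/
noncomputable def bmk (a : Mat n) : MvPolynomial (Fin n) ℤ →+* BRing n a :=
  Ideal.Quotient.mk _

/-- The class `x_i` in the Bott ring (0-based: `bx a i` is the paper's `x_{i+1}`). -/
noncomputable def bx (a : Mat n) (i : Fin n) : BRing n a := bmk n a (X i)

/-- The class of `α_i` in the Bott ring. -/
noncomputable def bal (a : Mat n) (i : Fin n) : BRing n a := bmk n a (alpha n a i)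

/-- `F_k(A)`: the span of the first `k` degree-2 generators (paper's `x_1, …, x_k`,
0-based indices `< k`). -/
noncomputable def F (a : Mat n) (k : ℕ) : Submodule ℤ (BRing n a) :=
  Submodule.span ℤ (bx n a '' {i : Fin n | (i : ℕ) < k})

/-- `H²(A)`: the span of all the degree-2 generators. -/
noncomputable def H2 (a : Mat n) : Submodule ℤ (BRing n a) :=
  Submodule.span ℤ (Set.range (bx n a))

/-- `ht(η) = min {k | η ∈ F_k(A)}`. -/
noncomputable def ht (a : Mat n) (η : BRing n a) : ℕ := sInf {k | η ∈ F n a k}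

/-- A ring isomorphism between Bott rings is graded iff it preserves the degree-2
components in both directions (both rings are generated in degree 2, so this is
equivalent to preserving the whole grading). -/
def IsGraded (a b : Mat n) (φ : BRing n a ≃+* BRing n b) : Prop :=
  (∀ z ∈ H2 n a, φ z ∈ H2 n b) ∧ (∀ z ∈ H2 n b, φ.symm z ∈ H2 n a)

/-- `φ` is `k`-stable: `φ(F_k(A)) ⊆ F_k(B)`. -/
def IsStable (a b : Mat n) (k : ℕ) (φ : BRing n a ≃+* BRing n b) : Prop :=
  ∀ z ∈ F n a k, φ z ∈ F n b k

/-! ### Rationalizations -/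

/-- The linear form `α_i` with rational coefficients. -/
noncomputable def alphaQ (a : Mat n) (i : Fin n) : MvPolynomial (Fin n) ℚ :=
  ∑ j, C ((a i j : ℚ)) * X j

noncomputable def bottIdealQ (a : Mat n) : Ideal (MvPolynomial (Fin n) ℚ) :=
  Ideal.span (Set.range fun i : Fin n => X i ^ 2 - alphaQ n a i * X i)

/-- The rationalized Bott ring `R_A ⊗ ℚ`. -/
abbrev BRingQ (a : Mat n) := MvPolynomial (Fin n) ℚ ⧸ bottIdealQ n a

noncomputable def bmkQ (a : Mat n) : MvPolynomial (Fin n) ℚ →+* BRingQ n a :=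
  Ideal.Quotient.mk _

noncomputable def bxQ (a : Mat n) (i : Fin n) : BRingQ n a := bmkQ n a (X i)

noncomputable def balQ (a : Mat n) (i : Fin n) : BRingQ n a := bmkQ n a (alphaQ n a i)

/-- `F_k(A) ⊗ ℚ` inside `R_A ⊗ ℚ`. -/
noncomputable def FQ (a : Mat n) (k : ℕ) : Submodule ℚ (BRingQ n a) :=
  Submodule.span ℚ (bxQ n a '' {i : Fin n | (i : ℕ) < k})

/-- The canonical map `R_A → R_A ⊗ ℚ`. -/
noncomputable def toQ (a : Mat n) : BRing n a →+* BRingQ n a :=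
  Ideal.Quotient.lift (bottIdeal n a)
    ((bmkQ n a).comp (MvPolynomial.map (Int.castRingHom ℚ)))
    (by
      intro p hp
      have hmap : ∀ i : Fin n,
          MvPolynomial.map (Int.castRingHom ℚ) (alpha n a i) = alphaQ n a i := by
        intro i
        simp [alpha, alphaQ, map_sum]
      have h : bottIdeal n a ≤
          Ideal.comap (MvPolynomial.map (Int.castRingHom ℚ)) (bottIdealQ n a) := by
        rw [bottIdeal, Ideal.span_le]
        rintro _ ⟨i, rfl⟩
        simp only [SetLike.mem_coe, Ideal.mem_comap, map_sub, map_mul, map_pow,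
          MvPolynomial.map_X, hmap]
        exact Ideal.subset_span ⟨i, rfl⟩
      rw [RingHom.comp_apply]
      exact Ideal.Quotient.eq_zero_iff_mem.mpr (h hp))

/-- The truncated linear form `β̄_ℓ` (rational version): for a 0-based row index `li`,
this is `∑_{k ≤ j < li} b_{li,j} y_j`, i.e. the paper's `β_ℓ` with its terms in
`F_k(B)` removed. -/
noncomputable def bbarQ (b : Mat n) (k : ℕ) (li : Fin n) : BRingQ n b :=
  ∑ j ∈ Finset.univ.filter (fun j : Fin n => k ≤ (j : ℕ) ∧ j < li),
    (b li j : ℚ) • bxQ n b j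

/-- Half of the truncated linear form `β̄_ℓ / 2` (meaningful when all relevant entries
are even), as an element of the integral Bott ring. -/
noncomputable def bbarHalf (b : Mat n) (k : ℕ) (li : Fin n) : BRing n b :=
  ∑ j ∈ Finset.univ.filter (fun j : Fin n => k ≤ (j : ℕ) ∧ j < li),
    (b li j / 2) • bx n b j

/-! ### Switching and twisting -/

/-- The matrix obtained from `b` by exchanging the rows and columns `p` and `q`. -/
def swapMat (b : Mat n) (p q : Fin n) : Mat n :=
  fun i j => b (Equiv.swap p q i) (Equiv.swap p q j)

/-- `g : R_C → R_{C'}` is a switching isomorphism: for some `j` (0-based `J`) with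
`c_{j+1,j} = 0`, `C'` is obtained from `C` by exchanging the `j`-th and `(j+1)`-st rows
and columns, and `g` swaps the `j`-th and `(j+1)`-st generators and fixes the others. -/
def IsSwitch (c c' : Mat n) (g : BRing n c ≃+* BRing n c') : Prop :=
  IsGraded n c c' g ∧
  ∃ (J : ℕ) (hJ : J + 1 < n),
    c ⟨J + 1, hJ⟩ ⟨J, by omega⟩ = 0 ∧
    c' = swapMat n c ⟨J, by omega⟩ ⟨J + 1, hJ⟩ ∧
    ∀ i, g (bx n c i) = bx n c' (Equiv.swap (⟨J, by omega⟩ : Fin n) ⟨J + 1, hJ⟩ i)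

/-- `g : R_C → R_{C'}` is a twisting isomorphism: for some `j` (0-based `J`) and
`v ∈ F_{j−1}(C)` with `v(γ_j − v) = 0`, the rows of `C'` before `j` agree with those of
`C`, `γ'_j = γ_j − 2v`, and `g` is a graded isomorphism fixing the first `j−1`
generators. -/
def IsTwist (c c' : Mat n) (g : BRing n c ≃+* BRing n c') : Prop :=
  IsGraded n c c' g ∧
  ∃ (J : ℕ) (hJ : J < n) (v : BRing n c),
    v ∈ F n c J ∧ v * (bal n c ⟨J, hJ⟩ - v) = 0 ∧
    (∀ i : Fin n, (i : ℕ) < J → ∀ m, c' i m = c i m) ∧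
    ((∑ m, c' ⟨J, hJ⟩ m • bx n c m) = bal n c ⟨J, hJ⟩ - 2 • v) ∧
    (∀ i : Fin n, (i : ℕ) < J → g (bx n c i) = bx n c' i)

/-- `IsMoveComp n c c' g` : `g : R_C → R_{C'}` is a finite (possibly empty) composition
of switching and twisting isomorphisms. -/
inductive IsMoveComp : ∀ c c' : Mat n, (BRing n c ≃+* BRing n c') → Prop
  | refl (c : Mat n) : IsMoveComp c c (RingEquiv.refl _)
  | switch {c c' c'' : Mat n} {g : BRing n c ≃+* BRing n c'}
      {g' : BRing n c' ≃+* BRing n c''} :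
      IsMoveComp c c' g → IsSwitch n c' c'' g' → IsMoveComp c c'' (g.trans g')
  | twist {c c' c'' : Mat n} {g : BRing n c ≃+* BRing n c'}
      {g' : BRing n c' ≃+* BRing n c''} :
      IsMoveComp c c' g → IsTwist n c' c'' g' → IsMoveComp c c'' (g.trans g')

end Defs

/-! ### Block matrices for ℚ-trivial Bott manifolds -/

/-- Starting (0-based) index of the `s`-th block for the partition `lam`. -/
def blockStart (t : ℕ) (lam : Fin t → ℕ) (s : Fin t) : ℕ :=
  ∑ s' ∈ Finset.univ.filter (fun s' : Fin t => s' < s), lam s'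

/-- The block-diagonal matrix with diagonal blocks `H_{λ_1}, …, H_{λ_t}`, where `H_j`
is the `j × j` strictly lower triangular matrix whose first column below the diagonal
consists of `1`s and whose other entries vanish. -/
def blockMat (n t : ℕ) (lam : Fin t → ℕ) : Mat n := fun i j =>
  if ∃ s : Fin t, (j : ℕ) = blockStart t lam s ∧ blockStart t lam s < (i : ℕ) ∧
      (i : ℕ) < blockStart t lam s + lam s then 1 else 0

/-- `H²(ℋ_{λ_s})`: the subgroup of the degree-2 component spanned by the generators
belonging to the `s`-th block. -/
noncomputable def blockH2 (n t : ℕ) (lam : Fin t → ℕ) (s : Fin t) :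
    Submodule ℤ (BRing n (blockMat n t lam)) :=
  Submodule.span ℤ (bx n (blockMat n t lam) ''
    {i : Fin n | blockStart t lam s ≤ (i : ℕ) ∧ (i : ℕ) < blockStart t lam s + lam s})

end Bott

/-!
The squarefree monomials `x_S = ∏_{i ∈ S} x_i` form a `ℤ`-basis of `R_A`: they span by the
relations `x_i² = α_i x_i`, and they are independent because `R_A` acts on the free module on
finsets through these same normal-form rules. So `R_A` is torsion free, the `x_i` are
independent, and for `y, z` in the span of the monomials in `x_1, …, x_{m-1}`, the element
`x_m y + z` determines `y`.

If `η = c x_m + η'` with `c ≠ 0` and `η' ∈ F_{m-1}` squares to zero, then reading off the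
`x_m`-part of `η² = c x_m (c α_m + 2η') + η'²` gives `2η' = -c α_m`, so
`0 = 4η² = c² (2x_m - α_m)² = c² α_m²`, hence `α_m² = 0` and `m ≤ k` by well-orderedness.
Conversely `(2x_i - α_i)² = α_i² = 0` for `i ≤ k`. Thus `F_k(A)` is the saturation of the span
of the square-zero elements of `H²(A)`, which every graded isomorphism preserves; comparing
ranks gives the equality of the two counts.
-/

theorem Commute.apply_apply {R M : Type*} [Semiring R] [AddCommMonoid M] [Module R M]
    {T U : Module.End R M} (h : Commute T U) (v : M) : T (U v) = U (T v) :=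
  LinearMap.congr_fun h.eq v

namespace Bott

open Finset

variable {n : ℕ}

section Saturation

variable {M N : Type*} [AddCommGroup M] [AddCommGroup N]

def saturation (W : Submodule ℤ M) : Submodule ℤ M :=
  (Submodule.torsion ℤ (M ⧸ W)).comap W.mkQ

theorem mem_saturation {W : Submodule ℤ M} {x : M} :
    x ∈ saturation W ↔ ∃ q : ℤ, q ≠ 0 ∧ q • x ∈ W := by
  simp only [saturation, Submodule.mem_comap, Submodule.mem_torsion_iff, Submodule.mkQ_apply,
    ← Submodule.Quotient.mk_smul, Submodule.Quotient.mk_eq_zero, Subtype.exists,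
    Submonoid.mk_smul, mem_nonZeroDivisors_iff_ne_zero, exists_prop]

theorem map_mem_saturation {F : Type*} [FunLike F M N] [AddMonoidHomClass F M N] (f : F)
    {W : Submodule ℤ M} {W' : Submodule ℤ N} (hf : ∀ x ∈ W, f x ∈ W') {x : M}
    (hx : x ∈ saturation W) : f x ∈ saturation W' := by
  obtain ⟨q, hq, hqx⟩ := mem_saturation.mp hx
  exact mem_saturation.mpr ⟨q, hq, map_zsmul f q x ▸ hf _ hqx⟩

theorem le_saturation (W : Submodule ℤ M) : W ≤ saturation W :=
  fun x hx => mem_saturation.mpr ⟨1, one_ne_zero, by rwa [one_smul]⟩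

end Saturation

theorem lt_natCard_subtype_iff {p : Fin n → Prop} (hp : ∀ j, p j → ∀ i < j, p i) (i : Fin n) :
    (i : ℕ) < Nat.card {i // p i} ↔ p i := by
  classical
  rw [Nat.card_eq_fintype_card, Fintype.card_subtype]
  constructor
  · intro h
    by_contra hi
    have hsub : univ.filter (fun j => p j) ⊆ Iio i := fun j hj => by
      have hpj := (mem_filter.mp hj).2
      rw [mem_Iio]
      by_contra hji
      rcases (not_lt.mp hji).lt_or_eq with hij | rfl
      exacts [hi (hp j hpj i hij), hi hpj]
    have := card_le_card hsub
    rw [Fin.card_Iio] at this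
    omega
  · intro hi
    have hsub : Iic i ⊆ univ.filter (fun j => p j) := fun j hj => by
      rcases (mem_Iic.mp hj).lt_or_eq with hji | rfl
      exacts [mem_filter.mpr ⟨mem_univ _, hp i hi j hji⟩, mem_filter.mpr ⟨mem_univ _, hi⟩]
    have := card_le_card hsub
    rw [Fin.card_Iic] at this
    omega

section NormalForm

variable (a : Mat n)

/-- Multiplication by `x_i` on normal forms `∑ c_S x_S` (`x_S` the squarefree monomial
`∏_{j ∈ S} x_j`): `x_i x_S = x_{S ∪ {i}}` if `i ∉ S`, and `x_i x_S = α_i x_S` if `i ∈ S`.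
Only the entries `a i j` with `j < i` enter, which makes the recursion well founded. -/
noncomputable def xOp (i : Fin n) : Module.End ℤ (Finset (Fin n) →₀ ℤ) :=
  Finsupp.lsum ℤ fun S =>
    if i ∈ S then
      (∑ j ∈ (univ.filter (· < i)).attach, a i j.1 • xOp j.1) ∘ₗ Finsupp.lsingle S
    else Finsupp.lsingle (insert i S)
  termination_by i.1
  decreasing_by exact (mem_filter.mp j.2).2

noncomputable def lowerXOp (i : Fin n) : Module.End ℤ (Finset (Fin n) →₀ ℤ) :=
  ∑ j ∈ univ.filter (· < i), a i j • xOp a j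

theorem xOp_single_of_notMem {i : Fin n} {S : Finset (Fin n)} (h : i ∉ S) :
    xOp a i (Finsupp.single S 1) = Finsupp.single (insert i S) 1 := by
  rw [xOp]
  simp [h]

theorem xOp_single_of_mem {i : Fin n} {S : Finset (Fin n)} (h : i ∈ S) :
    xOp a i (Finsupp.single S 1) = lowerXOp a i (Finsupp.single S 1) := by
  rw [xOp, lowerXOp]
  simp only [Finsupp.lsum_single, if_pos h, LinearMap.comp_apply, Finsupp.lsingle_apply]
  rw [Finset.sum_attach (univ.filter (· < i)) (fun j => a i j • xOp a j)]

variable {a} in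
theorem commute_lowerXOp {T : Module.End ℤ (Finset (Fin n) →₀ ℤ)} {i : Fin n}
    (h : ∀ j < i, Commute T (xOp a j)) : Commute T (lowerXOp a i) :=
  Commute.sum_right _ _ _ fun j hj => (h j (mem_filter.mp hj).2).smul_right _

theorem lowerXOp_eq_sum (ha : SLT a) (i : Fin n) :
    lowerXOp a i = ∑ j, a i j • xOp a j := by
  refine sum_subset (filter_subset _ _) fun j _ hj => ?_
  have : a i j = 0 := by
    by_contra hz
    exact hj (mem_filter.mpr ⟨mem_univ _, ha i j hz⟩)
  rw [this, zero_smul]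

theorem commute_xOp_of_lt {i j : Fin n} (hji : j < i)
    (hlow : ∀ p < i, ∀ q < i, Commute (xOp a p) (xOp a q))
    (hi : ∀ l < j, Commute (xOp a i) (xOp a l)) : Commute (xOp a i) (xOp a j) := by
  have hiA : Commute (xOp a i) (lowerXOp a j) := commute_lowerXOp hi
  have hjA : Commute (xOp a j) (lowerXOp a i) := commute_lowerXOp (hlow j hji)
  have hAA : Commute (lowerXOp a j) (lowerXOp a i) :=
    commute_lowerXOp fun p hp => (commute_lowerXOp fun q hq => hlow p hp q (hq.trans hji)).symm
  refine Finsupp.lhom_ext' fun S => LinearMap.ext_ring ?_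
  simp only [LinearMap.comp_apply, Finsupp.lsingle_apply, Module.End.mul_apply]
  have hij : i ≠ j := hji.ne'
  by_cases hiS : i ∈ S <;> by_cases hjS : j ∈ S
  · rw [xOp_single_of_mem a hjS, xOp_single_of_mem a hiS, hiA.apply_apply, hjA.apply_apply,
      xOp_single_of_mem a hjS, xOp_single_of_mem a hiS, hAA.apply_apply]
  · rw [xOp_single_of_notMem a hjS, xOp_single_of_mem a (mem_insert_of_mem hiS),
      xOp_single_of_mem a hiS, hjA.apply_apply, xOp_single_of_notMem a hjS]
  · rw [xOp_single_of_mem a hjS, hiA.apply_apply, xOp_single_of_notMem a hiS,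
      xOp_single_of_mem a (mem_insert_of_mem hjS)]
  · rw [xOp_single_of_notMem a hjS, xOp_single_of_notMem a hiS,
      xOp_single_of_notMem a (by simp [hij, hiS]),
      xOp_single_of_notMem a (by simp [hij.symm, hjS]), insert_comm]

theorem commute_xOp (i j : Fin n) : Commute (xOp a i) (xOp a j) := by
  have key : ∀ i j : Fin n, j < i → Commute (xOp a i) (xOp a j) := by
    intro i
    induction i using WellFoundedLT.induction with
    | _ i ihi =>
      have hlow : ∀ p < i, ∀ q < i, Commute (xOp a p) (xOp a q) := by
        intro p hp q hq
        rcases lt_trichotomy p q with h | rfl | h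
        · exact (ihi q hq p h).symm
        · exact Commute.refl _
        · exact ihi p hp q h
      intro j
      induction j using WellFoundedLT.induction with
      | _ j ihj =>
        exact fun hji => commute_xOp_of_lt a hji hlow fun l hl => ihj l hl (hl.trans hji)
  rcases lt_trichotomy i j with h | rfl | h
  · exact (key j i h).symm
  · exact Commute.refl _
  · exact key i j h

theorem xOp_mul_self (i : Fin n) : xOp a i * xOp a i = lowerXOp a i * xOp a i := by
  refine Finsupp.lhom_ext' fun S => LinearMap.ext_ring ?_
  simp only [LinearMap.comp_apply, Finsupp.lsingle_apply, Module.End.mul_apply]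
  by_cases hiS : i ∈ S
  · have hcomm : Commute (xOp a i) (lowerXOp a i) := commute_lowerXOp fun j _ => commute_xOp a i j
    rw [xOp_single_of_mem a hiS, hcomm.apply_apply, xOp_single_of_mem a hiS]
  · rw [xOp_single_of_notMem a hiS, xOp_single_of_mem a (mem_insert_self i S)]

open scoped IsMulCommutative in
noncomputable def xOpEval : MvPolynomial (Fin n) ℤ →ₐ[ℤ] Module.End ℤ (Finset (Fin n) →₀ ℤ) :=
  haveI := Algebra.isMulCommutative_adjoin ℤ (s := Set.range (xOp a))
    (by rintro _ ⟨i, rfl⟩ _ ⟨j, rfl⟩; exact commute_xOp a i j)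
  (Algebra.adjoin ℤ (Set.range (xOp a))).val.comp
    (aeval fun i => ⟨xOp a i, Algebra.subset_adjoin ⟨i, rfl⟩⟩)

theorem xOpEval_X (i : Fin n) : xOpEval a (X i) = xOp a i := by
  simp [xOpEval]

theorem xOpEval_alpha (ha : SLT a) (i : Fin n) : xOpEval a (alpha n a i) = lowerXOp a i := by
  simp only [alpha, map_sum, ← smul_eq_C_mul, map_zsmul, xOpEval_X, lowerXOp_eq_sum a ha]

noncomputable def bottRep (ha : SLT a) : BRing n a →+* Module.End ℤ (Finset (Fin n) →₀ ℤ) :=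
  Ideal.Quotient.lift _ (xOpEval a).toRingHom <| by
    suffices bottIdeal n a ≤ RingHom.ker (xOpEval a).toRingHom from fun p hp => this hp
    rw [bottIdeal, Ideal.span_le]
    rintro _ ⟨i, rfl⟩
    simp [xOpEval_X, xOpEval_alpha a ha, sq, xOp_mul_self]

theorem bottRep_bx (ha : SLT a) (i : Fin n) : bottRep a ha (bx n a i) = xOp a i :=
  (Ideal.Quotient.lift_mk _ _ _).trans (xOpEval_X a i)

/-- The coefficients of an element in the squarefree monomials, read off from its action
on `x_∅ = 1`. -/
noncomputable def normalForm (ha : SLT a) : BRing n a →ₗ[ℤ] Finset (Fin n) →₀ ℤ where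
  toFun z := bottRep a ha z (Finsupp.single ∅ 1)
  map_add' _ _ := by simp
  map_smul' _ _ := by simp

noncomputable def prodBx (S : Finset (Fin n)) : BRing n a := ∏ i ∈ S, bx n a i

theorem normalForm_prodBx (ha : SLT a) (S : Finset (Fin n)) :
    normalForm a ha (prodBx a S) = Finsupp.single S 1 := by
  induction S using Finset.induction with
  | empty => simp [normalForm, prodBx]
  | insert i S hi ih =>
    simp only [normalForm, prodBx, LinearMap.coe_mk, AddHom.coe_mk] at ih ⊢
    rw [prod_insert hi, map_mul, Module.End.mul_apply, ih, bottRep_bx, xOp_single_of_notMem a hi]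

theorem linearIndependent_prodBx (ha : SLT a) : LinearIndependent ℤ (prodBx a) := by
  refine LinearIndependent.of_comp (normalForm a ha) ?_
  convert Finsupp.linearIndependent_single_one ℤ (Finset (Fin n))
  · exact normalForm_prodBx a ha _
  · exact Subsingleton.elim (α := Module ℤ (Finset (Fin n) →₀ ℤ)) _ _

end NormalForm

section BottBasis

variable (a : Mat n)

theorem prodBx_singleton (i : Fin n) : prodBx a {i} = bx n a i := prod_singleton _ _

theorem prodBx_insert {i : Fin n} {S : Finset (Fin n)} (h : i ∉ S) :
    prodBx a (insert i S) = bx n a i * prodBx a S :=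
  prod_insert h

theorem bx_mul_self (i : Fin n) : bx n a i * bx n a i = bal n a i * bx n a i := by
  have h : bmk n a (X i ^ 2 - alpha n a i * X i) = 0 :=
    Ideal.Quotient.eq_zero_iff_mem.mpr (Ideal.subset_span ⟨i, rfl⟩)
  rwa [map_sub, map_mul, map_pow, sub_eq_zero, sq] at h

theorem bal_eq_sum (i : Fin n) : bal n a i = ∑ j, a i j • bx n a j := by
  simp only [bal, alpha, map_sum, ← smul_eq_C_mul, map_zsmul]
  rfl

noncomputable def lowerSpan (m : ℕ) : Submodule ℤ (BRing n a) :=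
  Submodule.span ℤ (prodBx a '' {S | ∀ i ∈ S, (i : ℕ) < m})

theorem lowerSpan_le_comap_mulLeft (ha : SLT a) {m : ℕ} (j : Fin n) (hj : (j : ℕ) < m) :
    lowerSpan a m ≤ (lowerSpan a m).comap (LinearMap.mulLeft ℤ (bx n a j)) := by
  induction j using WellFoundedLT.induction with
  | _ j ih =>
  rw [lowerSpan, Submodule.span_le]
  rintro _ ⟨S, hS, rfl⟩
  simp only [SetLike.mem_coe, Submodule.mem_comap, LinearMap.mulLeft_apply]
  by_cases hjS : j ∈ S
  · have hS' : prodBx a S = bx n a j * ∏ i ∈ S.erase j, bx n a i :=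
      (mul_prod_erase S _ hjS).symm
    have hsq : bx n a j * prodBx a S = ∑ p, a j p • (bx n a p * prodBx a S) := by
      rw [hS', ← mul_assoc, bx_mul_self, mul_assoc, ← hS', bal_eq_sum, sum_mul]
      simp_rw [smul_mul_assoc]
    rw [hsq]
    refine Submodule.sum_mem _ fun p _ => ?_
    by_cases hp : a j p = 0
    · simp [hp]
    · exact Submodule.smul_mem _ _ <|
        ih p (ha j p hp) ((ha j p hp).trans hj) (Submodule.subset_span ⟨S, hS, rfl⟩)
  · rw [← prodBx_insert a hjS]
    refine Submodule.subset_span ⟨_, fun i hi => ?_, rfl⟩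
    rcases mem_insert.mp hi with rfl | hi
    exacts [hj, hS i hi]

theorem mul_mem_lowerSpan (ha : SLT a) {m : ℕ} {y z : BRing n a} (hy : y ∈ F n a m)
    (hz : z ∈ lowerSpan a m) : y * z ∈ lowerSpan a m := by
  have : F n a m ≤ (lowerSpan a m).comap (LinearMap.mulRight ℤ z) := by
    rw [F, Submodule.span_le]
    rintro _ ⟨i, hi, rfl⟩
    exact lowerSpan_le_comap_mulLeft a ha i hi hz
  exact this hy

theorem F_le_lowerSpan (m : ℕ) : F n a m ≤ lowerSpan a m := by
  rw [F, Submodule.span_le]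
  rintro _ ⟨i, hi, rfl⟩
  exact Submodule.subset_span ⟨{i}, by simpa using hi, prodBx_singleton a i⟩

theorem span_prodBx_eq_top (ha : SLT a) : Submodule.span ℤ (Set.range (prodBx a)) = ⊤ := by
  have hspan : Submodule.span ℤ (Set.range (prodBx a)) = lowerSpan a n := by
    rw [lowerSpan, ← Set.image_univ]
    congr
    exact (Set.eq_univ_of_forall fun S i _ => i.isLt).symm
  rw [eq_top_iff]
  rintro z -
  obtain ⟨p, rfl⟩ := Ideal.Quotient.mk_surjective z
  induction p using MvPolynomial.induction_on with
  | C c =>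
    rw [← mul_one (C c), ← smul_eq_C_mul, map_zsmul, map_one]
    exact Submodule.smul_mem _ _ (Submodule.subset_span ⟨∅, prod_empty⟩)
  | add p q hp hq => rw [map_add]; exact add_mem hp hq
  | mul_X p i hp =>
    rw [map_mul, mul_comm, hspan]
    exact lowerSpan_le_comap_mulLeft a ha i i.isLt (hspan ▸ hp)

noncomputable def bottBasis (ha : SLT a) : Module.Basis (Finset (Fin n)) ℤ (BRing n a) :=
  .mk (linearIndependent_prodBx a ha) (span_prodBx_eq_top a ha).ge

theorem bottBasis_apply (ha : SLT a) (S : Finset (Fin n)) : bottBasis a ha S = prodBx a S :=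
  Module.Basis.mk_apply _ _ _

theorem eq_zero_of_intCast_mul_eq_zero (ha : SLT a) {c : ℤ} (hc : c ≠ 0) {z : BRing n a}
    (h : (c : BRing n a) * z = 0) : z = 0 := by
  rw [← zsmul_eq_mul] at h
  exact ((bottBasis a ha).smul_eq_zero.mp h).resolve_left hc

theorem linearIndependent_bx (ha : SLT a) : LinearIndependent ℤ (bx n a) := by
  convert (linearIndependent_prodBx a ha).comp _ (singleton_injective (α := Fin n))
  exact funext fun i => (prodBx_singleton a i).symm

theorem F_eq_span_bottBasis (ha : SLT a) (k : ℕ) :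
    F n a k =
      Submodule.span ℤ (bottBasis a ha '' ((fun i => {i}) '' {i : Fin n | (i : ℕ) < k})) := by
  rw [F, Set.image_image]
  simp_rw [bottBasis_apply, prodBx_singleton]

theorem mem_F_of_zsmul_mem (ha : SLT a) {k : ℕ} {q : ℤ} (hq : q ≠ 0) {z : BRing n a}
    (h : q • z ∈ F n a k) : z ∈ F n a k := by
  rw [F_eq_span_bottBasis a ha, Module.Basis.mem_span_image] at h ⊢
  rwa [map_zsmul, Finsupp.support_smul_eq hq] at h

noncomputable def coeffBx (ha : SLT a) (m : Fin n) : BRing n a →ₗ[ℤ] BRing n a :=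
  (bottBasis a ha).constr ℤ fun S => if m ∈ S then prodBx a (S.erase m) else 0

theorem coeffBx_eq_zero (ha : SLT a) (m : Fin n) {z : BRing n a} (hz : z ∈ lowerSpan a m) :
    coeffBx a ha m z = 0 := by
  suffices lowerSpan a m ≤ LinearMap.ker (coeffBx a ha m) from this hz
  rw [lowerSpan, Submodule.span_le]
  rintro _ ⟨S, hS, rfl⟩
  have hmS : m ∉ S := fun h => (hS m h).false
  rw [SetLike.mem_coe, LinearMap.mem_ker, ← bottBasis_apply a ha, coeffBx,
    Module.Basis.constr_basis, if_neg hmS]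

theorem coeffBx_bx_mul (ha : SLT a) (m : Fin n) {z : BRing n a} (hz : z ∈ lowerSpan a m) :
    coeffBx a ha m (bx n a m * z) = z := by
  refine LinearMap.eqOn_span' (f := coeffBx a ha m ∘ₗ LinearMap.mulLeft ℤ (bx n a m))
    (g := LinearMap.id) ?_ hz
  rintro _ ⟨S, hS, rfl⟩
  have hmS : m ∉ S := fun h => (hS m h).false
  simp only [LinearMap.comp_apply, LinearMap.mulLeft_apply, LinearMap.id_apply]
  rw [← prodBx_insert a hmS, ← bottBasis_apply a ha, coeffBx,
    Module.Basis.constr_basis, if_pos (mem_insert_self m S), erase_insert hmS]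

theorem eq_zero_of_bx_mul_add_eq_zero (ha : SLT a) {m : Fin n} {y z : BRing n a}
    (hy : y ∈ lowerSpan a m) (hz : z ∈ lowerSpan a m) (h : bx n a m * y + z = 0) : y = 0 := by
  simpa [coeffBx_bx_mul a ha m hy, coeffBx_eq_zero a ha m hz] using congrArg (coeffBx a ha m) h

theorem finrank_F (ha : SLT a) {k : ℕ} (hk : k ≤ n) : Module.finrank ℤ (F n a k) = k := by
  have hF : F n a k = Submodule.span ℤ (Set.range (bx n a ∘ Fin.castLE hk)) := by
    rw [F]
    congr
    ext z
    constructor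
    · rintro ⟨i, hi, rfl⟩
      exact ⟨⟨i, hi⟩, rfl⟩
    · rintro ⟨j, rfl⟩
      exact ⟨_, j.isLt, rfl⟩
  rw [hF, finrank_span_eq_card ((linearIndependent_bx a ha).comp _ (Fin.castLE_injective hk)),
    Fintype.card_fin]

theorem F_zero : F n a 0 = ⊥ := by
  simp [F]

theorem H2_eq_F : H2 n a = F n a n := by
  rw [H2, F, ← Set.image_univ]
  congr
  exact (Set.eq_univ_of_forall fun i => i.isLt).symm

theorem bx_mem_H2 (i : Fin n) : bx n a i ∈ H2 n a := Submodule.subset_span ⟨i, rfl⟩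

theorem F_le_H2 (k : ℕ) : F n a k ≤ H2 n a :=
  Submodule.span_mono (Set.image_subset_range _ _)

theorem F_mono {k l : ℕ} (h : k ≤ l) : F n a k ≤ F n a l :=
  Submodule.span_mono (Set.image_mono fun _ hi => lt_of_lt_of_le hi h)

theorem exists_eq_zsmul_bx_add_of_mem_F_succ {m : Fin n} {z : BRing n a}
    (h : z ∈ F n a (m + 1)) : ∃ c : ℤ, ∃ z' ∈ F n a m, z = c • bx n a m + z' := by
  have hset : {i : Fin n | (i : ℕ) < m + 1} = insert m {i : Fin n | (i : ℕ) < m} := by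
    ext i
    simp only [Set.mem_ofPred_eq, Set.mem_insert_iff, Fin.ext_iff]
    omega
  rwa [F, hset, Set.image_insert_eq, Submodule.mem_span_insert] at h

theorem bal_mem_F (ha : SLT a) (i : Fin n) : bal n a i ∈ F n a i := by
  rw [bal_eq_sum]
  refine Submodule.sum_mem _ fun j _ => ?_
  by_cases h : a i j = 0
  · simp [h]
  · exact Submodule.smul_mem _ _ (Submodule.subset_span ⟨j, ha i j h, rfl⟩)

end BottBasis

section SquareZero

variable (a : Mat n)

def WellOrdered : Prop := ∀ j : Fin n, bal n a j ^ 2 = 0 → ∀ i < j, bal n a i ^ 2 = 0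

noncomputable def sqZeroCount : ℕ := Nat.card {i : Fin n // bal n a i ^ 2 = 0}

theorem sqZeroCount_le : sqZeroCount a ≤ n :=
  (Finite.card_subtype_le _).trans_eq (Nat.card_fin n)

theorem bal_sq_eq_zero_of_mul_self_eq_zero (ha : SLT a) {m : Fin n} {c : ℤ} (hc : c ≠ 0)
    {η' : BRing n a} (hη' : η' ∈ F n a m)
    (hsq : (c • bx n a m + η') * (c • bx n a m + η') = 0) : bal n a m ^ 2 = 0 := by
  rw [zsmul_eq_mul] at hsq
  have hx := bx_mul_self a m
  have hL : (c : BRing n a) * bal n a m + 2 * η' = 0 := by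
    have hmem : (c : BRing n a) * ((c : BRing n a) * bal n a m + 2 * η') ∈ F n a m := by
      rw [← zsmul_eq_mul, ← zsmul_eq_mul, two_mul]
      exact Submodule.smul_mem _ _
        (add_mem (Submodule.smul_mem _ _ (bal_mem_F a ha m)) (add_mem hη' hη'))
    refine eq_zero_of_intCast_mul_eq_zero a ha hc <| eq_zero_of_bx_mul_add_eq_zero a ha
      (F_le_lowerSpan a m hmem) (mul_mem_lowerSpan a ha hη' (F_le_lowerSpan a m hη')) ?_
    linear_combination hsq - (c : BRing n a) ^ 2 * hx
  refine eq_zero_of_intCast_mul_eq_zero a ha (pow_ne_zero 2 hc) ?_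
  push_cast
  linear_combination ((c : BRing n a) * bal n a m - 2 * η' - 4 * c * bx n a m) * hL + 4 * hsq -
    4 * (c : BRing n a) ^ 2 * hx

theorem mem_F_sqZeroCount_of_mul_self_eq_zero (ha : SLT a) (hwa : WellOrdered a)
    {η : BRing n a} (hη : η ∈ H2 n a) (hsq : η * η = 0) : η ∈ F n a (sqZeroCount a) := by
  rw [H2_eq_F] at hη
  suffices ∀ m ≤ n, ∀ η ∈ F n a m, η * η = 0 → η ∈ F n a (sqZeroCount a) from
    this n le_rfl η hη hsq
  intro m
  induction m with
  | zero =>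
    intro _ η hη _
    rw [F_zero, Submodule.mem_bot] at hη
    exact hη ▸ zero_mem _
  | succ m ih =>
    intro hm η hη hsq
    obtain ⟨c, η', hη', rfl⟩ := exists_eq_zsmul_bx_add_of_mem_F_succ a (m := ⟨m, hm⟩) hη
    by_cases hc : c = 0
    · rw [hc, zero_smul, zero_add] at hsq ⊢
      exact ih (by omega) η' hη' hsq
    · have hmk : m < sqZeroCount a := (lt_natCard_subtype_iff hwa ⟨m, hm⟩).mpr
        (bal_sq_eq_zero_of_mul_self_eq_zero a ha hc hη' hsq)
      exact F_mono a hmk hη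

noncomputable def sqZeroSpan : Submodule ℤ (BRing n a) :=
  Submodule.span ℤ {z | z ∈ H2 n a ∧ z * z = 0}

theorem sqZeroSpan_le_F (ha : SLT a) (hwa : WellOrdered a) :
    sqZeroSpan a ≤ F n a (sqZeroCount a) :=
  Submodule.span_le.mpr fun _ hz => mem_F_sqZeroCount_of_mul_self_eq_zero a ha hwa hz.1 hz.2

/-- Induction on `i < k`, using `2 x_i = (2 x_i - α_i) + α_i` with `α_i ∈ F_i`. -/
theorem F_sqZeroCount_le_saturation (ha : SLT a) (hwa : WellOrdered a) :
    F n a (sqZeroCount a) ≤ saturation (sqZeroSpan a) := by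
  rw [F, Submodule.span_le]
  rintro _ ⟨i, hi, rfl⟩
  induction i using WellFoundedLT.induction with
  | _ i ih =>
  have hbal : bal n a i ∈ saturation (sqZeroSpan a) := by
    refine (Submodule.span_le.mpr ?_ : F n a i ≤ _) (bal_mem_F a ha i)
    rintro _ ⟨j, hj, rfl⟩
    exact ih j hj (lt_trans (Fin.lt_def.mp hj) hi)
  have hgen : (2 : ℤ) • bx n a i - bal n a i ∈ sqZeroSpan a := by
    have hsq : bal n a i ^ 2 = 0 := (lt_natCard_subtype_iff hwa i).mp hi
    refine Submodule.subset_span ⟨sub_mem (Submodule.smul_mem _ _ (bx_mem_H2 a i))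
      (F_le_H2 a i (bal_mem_F a ha i)), ?_⟩
    rw [two_smul]
    linear_combination 4 * bx_mul_self a i + hsq
  obtain ⟨q, hq, hqW⟩ := mem_saturation.mp
    (add_mem (le_saturation _ hgen) hbal : (2 : ℤ) • bx n a i - bal n a i + bal n a i ∈ _)
  refine mem_saturation.mpr ⟨q * 2, mul_ne_zero hq two_ne_zero, ?_⟩
  rwa [sub_add_cancel, smul_smul] at hqW

theorem F_sqZeroCount_eq_saturation (ha : SLT a) (hwa : WellOrdered a) :
    F n a (sqZeroCount a) = saturation (sqZeroSpan a) := by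
  refine le_antisymm (F_sqZeroCount_le_saturation a ha hwa) fun z hz => ?_
  obtain ⟨q, hq, hqz⟩ := mem_saturation.mp hz
  exact mem_F_of_zsmul_mem a ha hq (sqZeroSpan_le_F a ha hwa hqz)

end SquareZero

namespace IsGraded

variable {a b : Mat n} {φ : BRing n a ≃+* BRing n b}

theorem symm (hφ : IsGraded n a b φ) : IsGraded n b a φ.symm :=
  ⟨hφ.2, by simpa using hφ.1⟩

theorem map_mem_sqZeroSpan (hφ : IsGraded n a b φ) {z : BRing n a} (hz : z ∈ sqZeroSpan a) :
    φ z ∈ sqZeroSpan b := by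
  induction hz using Submodule.span_induction with
  | mem z hz => exact Submodule.subset_span ⟨hφ.1 z hz.1, by rw [← map_mul, hz.2, map_zero]⟩
  | zero => simp
  | add x y _ _ hx hy => simpa using add_mem hx hy
  | smul q x _ hx => simpa using Submodule.smul_mem _ q hx

theorem map_mem_F (ha : SLT a) (hb : SLT b) (hwa : WellOrdered a) (hwb : WellOrdered b)
    (hφ : IsGraded n a b φ) {z : BRing n a} (hz : z ∈ F n a (sqZeroCount a)) :
    φ z ∈ F n b (sqZeroCount b) := by
  rw [F_sqZeroCount_eq_saturation a ha hwa] at hz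
  rw [F_sqZeroCount_eq_saturation b hb hwb]
  exact map_mem_saturation φ (fun _ => hφ.map_mem_sqZeroSpan) hz

theorem image_F (ha : SLT a) (hb : SLT b) (hwa : WellOrdered a) (hwb : WellOrdered b)
    (hφ : IsGraded n a b φ) :
    ⇑φ '' (F n a (sqZeroCount a) : Set (BRing n a)) = F n b (sqZeroCount b) := by
  refine Set.Subset.antisymm ?_ fun z hz => ⟨φ.symm z, ?_, φ.apply_symm_apply z⟩
  · rintro _ ⟨z, hz, rfl⟩
    exact hφ.map_mem_F ha hb hwa hwb hz
  · exact hφ.symm.map_mem_F hb ha hwb hwa hz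

theorem sqZeroCount_eq (ha : SLT a) (hb : SLT b) (hwa : WellOrdered a) (hwb : WellOrdered b)
    (hφ : IsGraded n a b φ) : sqZeroCount a = sqZeroCount b := by
  rw [← finrank_F a ha (sqZeroCount_le a), ← finrank_F b hb (sqZeroCount_le b)]
  refine (LinearEquiv.ofSubmodules φ.toAddEquiv.toIntLinearEquiv _ _ ?_).finrank_eq
  exact SetLike.coe_injective ((Submodule.map_coe _ _).trans (hφ.image_F ha hb hwa hwb))

end IsGraded

theorem stmt_7_general (n : ℕ) (a b : Mat n) (ha : SLT a) (hb : SLT b)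
    (hwa : ∀ j : Fin n, bal n a j ^ 2 = 0 → ∀ i < j, bal n a i ^ 2 = 0)
    (hwb : ∀ j : Fin n, bal n b j ^ 2 = 0 → ∀ i < j, bal n b i ^ 2 = 0)
    (φ : BRing n a ≃+* BRing n b) (hφ : IsGraded n a b φ) :
    Nat.card {i : Fin n // bal n a i ^ 2 = 0} = Nat.card {i : Fin n // bal n b i ^ 2 = 0} ∧
    ⇑φ '' (F n a (Nat.card {i : Fin n // bal n a i ^ 2 = 0}) : Set (BRing n a)) =
      (F n b (Nat.card {i : Fin n // bal n a i ^ 2 = 0}) : Set (BRing n b)) ∧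
    IsStable n a b (Nat.card {i : Fin n // bal n a i ^ 2 = 0}) φ := by
  change sqZeroCount a = sqZeroCount b ∧
    ⇑φ '' (F n a (sqZeroCount a) : Set (BRing n a)) = F n b (sqZeroCount a) ∧
    IsStable n a b (sqZeroCount a) φ
  have hk : sqZeroCount a = sqZeroCount b := hφ.sqZeroCount_eq ha hb hwa hwb
  have himage := hφ.image_F ha hb hwa hwb
  rw [← hk] at himage
  refine ⟨hk, himage, fun z hz => ?_⟩
  rw [← SetLike.mem_coe, ← himage]
  exact Set.mem_image_of_mem φ hz

/-- Assume `A` and `B` are well-ordered (`α_j² = 0` implies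
`α_i² = 0` for `i < j`, and likewise for the `β`'s).  Let `φ : R_A → R_B` be a graded
ring isomorphism and `k := #{i : α_i² = 0}`.  Then `k = #{i : β_i² = 0}` and
`φ(F_k(A)) = F_k(B)`; in particular `φ` is `k`-stable. -/
theorem stmt_7 (n : ℕ) (hn : 1 ≤ n) (a b : Mat n) (ha : SLT a) (hb : SLT b)
    (hwa : ∀ j : Fin n, bal n a j ^ 2 = 0 → ∀ i < j, bal n a i ^ 2 = 0)
    (hwb : ∀ j : Fin n, bal n b j ^ 2 = 0 → ∀ i < j, bal n b i ^ 2 = 0)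
    (φ : BRing n a ≃+* BRing n b) (hφ : IsGraded n a b φ) :
    Nat.card {i : Fin n // bal n a i ^ 2 = 0} = Nat.card {i : Fin n // bal n b i ^ 2 = 0} ∧
    ⇑φ '' (F n a (Nat.card {i : Fin n // bal n a i ^ 2 = 0}) : Set (BRing n a)) =
      (F n b (Nat.card {i : Fin n // bal n a i ^ 2 = 0}) : Set (BRing n b)) ∧
    IsStable n a b (Nat.card {i : Fin n // bal n a i ^ 2 = 0}) φ :=
  stmt_7_general n a b ha hb hwa hwb φ hφ

end Bott
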